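/- Let k, ℓ ≥ 1 be integers with k ≠ ℓ. Then the polynomial f_{kℓ}(x,y,z) = A_{kℓ}z² + B_{kℓ}(x,y)z + C_{kℓ}(x,y), viewed as an element of the polynomial ring ℂ[x,y,z], is irreducible. -/

import Mathlib

open MvPolynomial in
/-- The polynomial `f_{kℓ}(x, y, z) = A_{kℓ} z² + B_{kℓ}(x, y) z + C_{kℓ}(x, y)`
as an element of `ℂ[x, y, z]`, with `x = X 0`, `y = X 1`, `z = X 2`. -/
noncomputable def fPoly (k l : ℕ) : MvPolynomial (Fin 3) ℂ :=
  C ((k : ℂ) * l * ((k : ℂ) + l) ^ 2) * X 2 ^ 2 +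
  C (2 * (k : ℂ) * l) * X 0 * (C 2 * X 0 ^ 2 - C (3 * ((k : ℂ) + l)) * X 1) * X 2 +
  (X 0 ^ 6 - C (3 * ((k : ℂ) + l)) * X 0 ^ 4 * X 1
    + C (3 * ((k : ℂ) ^ 2 + (k : ℂ) * l + (l : ℂ) ^ 2)) * X 0 ^ 2 * X 1 ^ 2
    - C (((k : ℂ) - l) ^ 2 * ((k : ℂ) + l)) * X 1 ^ 3)

/-! Viewed as a quadratic in `z` over `ℂ[x, y]`, `f_{kℓ}` has the unit leading coefficient
`A_{kℓ}`, so it is irreducible as soon as its discriminant is not a square in `ℂ[x, y]`. That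
discriminant is `-4kℓ(k - ℓ)² (x² - (k + ℓ)y)³`, and setting `x = 0` turns it into a nonzero
multiple of `y³`, which has odd degree. -/

namespace Polynomial

variable {R : Type*} [CommRing R] [IsDomain R]

theorem irreducible_quadratic_of_discrim_ne_sq {a b c : R} (ha : IsUnit a)
    (hdisc : ∀ s : R, discrim a b c ≠ s ^ 2) :
    Irreducible (C a * X ^ 2 + C b * X + C c) := by
  -- A proper factor of the monic associate `q` is linear and monic, so it gives a root.
  set q : R[X] := X ^ 2 + C (↑ha.unit⁻¹ * b) * X + C (↑ha.unit⁻¹ * c)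
  have hq : C a * q = C a * X ^ 2 + C b * X + C c := by
    have hinv (d : R) : C a * C (↑ha.unit⁻¹ * d) = C d := by
      rw [← C_mul, ← mul_assoc, ha.mul_val_inv, one_mul]
    linear_combination X * hinv b + hinv c
  have hq_monic : q.Monic := by unfold q; monicity!
  have hq_deg : q.natDegree = 2 := by unfold q; compute_degree!
  rw [← hq, irreducible_isUnit_mul (ha.map C),
    hq_monic.irreducible_iff_roots_eq_zero_of_degree_le_three (by omega) (by omega)]
  refine Multiset.eq_zero_of_forall_notMem fun r hr ↦ ?_
  have hroot : (C a * q).eval r = 0 := by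
    rw [eval_mul, (mem_roots hq_monic.ne_zero).mp hr, mul_zero]
  apply quadratic_ne_zero_of_discrim_ne_sq hdisc r
  simpa [hq, sq] using hroot

theorem sq_ne_C_mul_X_pow_odd {c : R} (hc : c ≠ 0) {n : ℕ} (hn : Odd n) (p : R[X]) :
    p ^ 2 ≠ C c * X ^ n := by
  intro h
  have hdeg := congrArg natDegree h
  rw [natDegree_pow, natDegree_C_mul_X_pow n c hc] at hdeg
  exact Nat.not_even_iff_odd.mpr hn ⟨p.natDegree, by omega⟩

end Polynomial

namespace MvPolynomial

section

variable {R : Type*} [CommRing R] [IsDomain R] {σ : Type*} [DecidableEq σ]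

theorem sq_ne_C_mul_cube {a b : R} (ha : a ≠ 0) (hb : b ≠ 0) {i j : σ} (hij : i ≠ j)
    (h : MvPolynomial σ R) : h ^ 2 ≠ C a * (X i ^ 2 - C b * X j) ^ 3 := by
  intro heq
  set φ := aeval (R := R) (Pi.single j (Polynomial.X : Polynomial R))
  have hspec := congrArg φ heq
  simp only [φ, map_pow, map_mul, map_sub, aeval_C, aeval_X, Pi.single_eq_same,
    Pi.single_eq_of_ne hij, Polynomial.algebraMap_apply, Algebra.algebraMap_self_apply] at hspec
  refine Polynomial.sq_ne_C_mul_X_pow_odd (c := -(a * b ^ 3)) (by simp [ha, hb]) ⟨1, rfl⟩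
    (φ h) ?_
  rw [hspec, Polynomial.C_neg, Polynomial.C_mul, Polynomial.C_pow]
  ring

end

section

variable (R : Type*) [CommSemiring R] (n : ℕ)

noncomputable def finSuccEquivLast :
    MvPolynomial (Fin (n + 1)) R ≃ₐ[R] Polynomial (MvPolynomial (Fin n) R) :=
  (renameEquiv R (finSuccEquiv' (Fin.last n))).trans (optionEquivLeft R (Fin n))

variable {R n}

@[simp]
theorem finSuccEquivLast_X_last : finSuccEquivLast R n (X (Fin.last n)) = Polynomial.X := by
  simp [finSuccEquivLast, optionEquivLeft_X_none]

@[simp]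
theorem finSuccEquivLast_X_castSucc (i : Fin n) :
    finSuccEquivLast R n (X i.castSucc) = Polynomial.C (X i) := by
  simp [finSuccEquivLast, finSuccEquiv'_last_apply_castSucc, optionEquivLeft_X_some]

@[simp]
theorem finSuccEquivLast_C (r : R) : finSuccEquivLast R n (C r) = Polynomial.C (C r) := by
  simp [finSuccEquivLast, optionEquivLeft_C]

end

end MvPolynomial

open MvPolynomial

noncomputable def fPolyA (k l : ℕ) : ℂ := k * l * ((k : ℂ) + l) ^ 2

noncomputable def fPolyB (k l : ℕ) : MvPolynomial (Fin 2) ℂ :=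
  C (2 * (k : ℂ) * l) * X 0 * (C 2 * X 0 ^ 2 - C (3 * ((k : ℂ) + l)) * X 1)

noncomputable def fPolyC (k l : ℕ) : MvPolynomial (Fin 2) ℂ :=
  X 0 ^ 6 - C (3 * ((k : ℂ) + l)) * X 0 ^ 4 * X 1
    + C (3 * ((k : ℂ) ^ 2 + (k : ℂ) * l + (l : ℂ) ^ 2)) * X 0 ^ 2 * X 1 ^ 2
    - C (((k : ℂ) - l) ^ 2 * ((k : ℂ) + l)) * X 1 ^ 3

theorem finSuccEquivLast_fPoly (k l : ℕ) :
    finSuccEquivLast ℂ 2 (fPoly k l) = Polynomial.C (C (fPolyA k l)) * Polynomial.X ^ 2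
      + Polynomial.C (fPolyB k l) * Polynomial.X + Polynomial.C (fPolyC k l) := by
  have h0 : (X 0 : MvPolynomial (Fin 3) ℂ) = X (Fin.castSucc 0) := rfl
  have h1 : (X 1 : MvPolynomial (Fin 3) ℂ) = X (Fin.castSucc 1) := rfl
  have h2 : (X 2 : MvPolynomial (Fin 3) ℂ) = X (Fin.last 2) := rfl
  simp only [fPoly, fPolyA, fPolyB, fPolyC, h0, h1, h2, map_add, map_sub, map_mul, map_pow,
    finSuccEquivLast_X_last, finSuccEquivLast_X_castSucc, finSuccEquivLast_C]

theorem discrim_fPoly (k l : ℕ) :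
    discrim (C (fPolyA k l)) (fPolyB k l) (fPolyC k l)
      = C (-4 * (k : ℂ) * l * ((k : ℂ) - l) ^ 2) * (X 0 ^ 2 - C ((k : ℂ) + l) * X 1) ^ 3 := by
  simp only [discrim, fPolyA, fPolyB, fPolyC, map_mul, map_add, map_sub, map_pow, map_neg,
    map_ofNat, map_natCast]
  ring

theorem fPoly_irreducible (k l : ℕ) (hk : 1 ≤ k) (hl : 1 ≤ l) (hkl : k ≠ l) :
    Irreducible (fPoly k l) := by
  have hk0 : (k : ℂ) ≠ 0 := Nat.cast_ne_zero.mpr (by omega)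
  have hl0 : (l : ℂ) ≠ 0 := Nat.cast_ne_zero.mpr (by omega)
  have hsum : (k : ℂ) + l ≠ 0 := by exact_mod_cast (by omega : k + l ≠ 0)
  have hdiff : (k : ℂ) - l ≠ 0 := sub_ne_zero.mpr (by exact_mod_cast hkl)
  rw [← MulEquiv.irreducible_iff (finSuccEquivLast ℂ 2), finSuccEquivLast_fPoly]
  refine Polynomial.irreducible_quadratic_of_discrim_ne_sq
    ((isUnit_iff_ne_zero.mpr (by simp [fPolyA, hk0, hl0, hsum])).map C) fun s ↦ ?_
  rw [discrim_fPoly]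
  exact (sq_ne_C_mul_cube (by simp [hk0, hl0, hdiff]) hsum (by decide) s).symm
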